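/- Let S = (N, M0) be a live H1S-WMG≤ system satisfying property R (both S and its reverse −S are reversible). Then R(S) = PR(S). -/
import Mathlib


open scoped Classical

structure PetriNet (P T : Type) where
  pre : P → T → ℕ
  post : T → P → ℕ

namespace PetriNet

variable {P T : Type}

def enabled (N : PetriNet P T) (M : P → ℕ) (t : T) : Prop :=
  ∀ p, N.pre p t ≤ M p

def fire (N : PetriNet P T) (M : P → ℕ) (t : T) : P → ℕ :=
  fun p => M p - N.pre p t + N.post t p

def feasible (N : PetriNet P T) : (P → ℕ) → List T → (P → ℕ) → Prop
  | M, [], M' => M' = M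
  | M, t :: σ, M' => N.enabled M t ∧ feasible N (N.fire M t) σ M'

def reachable (N : PetriNet P T) (M0 M : P → ℕ) : Prop :=
  ∃ σ : List T, N.feasible M0 σ M

def inc (N : PetriNet P T) (p : P) (t : T) : ℤ :=
  (N.post t p : ℤ) - (N.pre p t : ℤ)

def potReach [Fintype T] (N : PetriNet P T) (M0 M : P → ℕ) : Prop :=
  ∃ Y : T → ℕ, ∀ p, (M p : ℤ) = (M0 p : ℤ) + ∑ t, N.inc p t * (Y t : ℤ)

def live (N : PetriNet P T) (M0 : P → ℕ) : Prop :=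
  ∀ (t : T) (M : P → ℕ), N.reachable M0 M →
    ∃ M', N.reachable M M' ∧ N.enabled M' t

def bounded (N : PetriNet P T) (M0 : P → ℕ) : Prop :=
  ∃ k : ℕ, ∀ M : P → ℕ, N.reachable M0 M → ∀ p, M p ≤ k

def reversible (N : PetriNet P T) (M0 : P → ℕ) : Prop :=
  ∀ M : P → ℕ, N.reachable M0 M → N.reachable M M0

def rev (N : PetriNet P T) : PetriNet P T :=
  ⟨fun p t => N.post t p, fun t p => N.pre p t⟩

def propR (N : PetriNet P T) (M0 : P → ℕ) : Prop :=
  N.reversible M0 ∧ N.rev.reversible M0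

def placePre [Fintype T] (N : PetriNet P T) (p : P) : Finset T :=
  Finset.univ.filter fun t => 0 < N.post t p

def placePost [Fintype T] (N : PetriNet P T) (p : P) : Finset T :=
  Finset.univ.filter fun t => 0 < N.pre p t

def transPre [Fintype P] (N : PetriNet P T) (t : T) : Finset P :=
  Finset.univ.filter fun p => 0 < N.pre p t

def transPost [Fintype P] (N : PetriNet P T) (t : T) : Finset P :=
  Finset.univ.filter fun p => 0 < N.post t p

def arc (N : PetriNet P T) : (P ⊕ T) → (P ⊕ T) → Prop
  | Sum.inl p, Sum.inr t => 0 < N.pre p t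
  | Sum.inr t, Sum.inl p => 0 < N.post t p
  | _, _ => False

def stronglyConnected (N : PetriNet P T) : Prop :=
  ∀ x y : P ⊕ T, Relation.ReflTransGen N.arc x y

def connectedNet (N : PetriNet P T) : Prop :=
  ∀ x y : P ⊕ T, Relation.ReflTransGen (fun a b => N.arc a b ∨ N.arc b a) x y

def ordinary (N : PetriNet P T) : Prop :=
  ∀ p t, N.pre p t ≤ 1 ∧ N.post t p ≤ 1

def isWMGle [Fintype T] (N : PetriNet P T) : Prop :=
  ∀ p, (N.placePre p).card ≤ 1 ∧ (N.placePost p).card ≤ 1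

def deadlock (N : PetriNet P T) (M : P → ℕ) : Prop :=
  ∀ t, ¬ N.enabled M t

end PetriNet


/-- A shared place: at least two output transitions. -/
def PetriNet.isShared {P T : Type} [Fintype T] (N : PetriNet P T) (p : P) : Prop :=
  2 ≤ (N.placePost p).card

/-- H1S-WMG≤ : homogeneous, at most one shared place, and the net obtained by deleting
all shared places (with their adjacent arcs) is a WMG≤ (equivalently, every
non-shared place has at most one input and at most one output transition). -/
def PetriNet.isH1SWMGle {P T : Type} [Fintype P] [Fintype T] (N : PetriNet P T) : Prop :=
  (∀ p t t', 0 < N.pre p t → 0 < N.pre p t' → N.pre p t = N.pre p t') ∧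
  (Finset.univ.filter fun p => N.isShared p).card ≤ 1 ∧
  ∀ p : P, ¬ N.isShared p → (N.placePre p).card ≤ 1 ∧ (N.placePost p).card ≤ 1


section AuxProofs
variable {P T : Type}

namespace PetriNet

lemma feasible_append (N : PetriNet P T) :
    ∀ (σ : List T) {M1 M2 M3 : P → ℕ} (τ : List T),
      N.feasible M1 σ M2 → N.feasible M2 τ M3 → N.feasible M1 (σ ++ τ) M3 := by
  intro σ
  induction σ with
  | nil =>
      intro M1 M2 M3 τ h1 h2
      have : M2 = M1 := h1
      subst this
      simpa using h2
  | cons t σ' ih =>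
      intro M1 M2 M3 τ h1 h2
      obtain ⟨hen, hfe⟩ := h1
      exact ⟨hen, ih τ hfe h2⟩

lemma reachable_trans (N : PetriNet P T) {M1 M2 M3 : P → ℕ}
    (h1 : N.reachable M1 M2) (h2 : N.reachable M2 M3) : N.reachable M1 M3 := by
  obtain ⟨σ, hσ⟩ := h1; obtain ⟨τ, hτ⟩ := h2
  exact ⟨σ ++ τ, N.feasible_append σ τ hσ hτ⟩

lemma reachable_refl (N : PetriNet P T) (M : P → ℕ) : N.reachable M M := ⟨[], rfl⟩

lemma fire_cast (N : PetriNet P T) {M : P → ℕ} {t : T} (h : N.enabled M t) (p : P) :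
    ((N.fire M t p : ℕ) : ℤ) = (M p : ℤ) + N.inc p t := by
  have := h p
  simp only [fire, inc]
  omega

lemma rev_enabled_fire (N : PetriNet P T) {M : P → ℕ} {t : T} (h : N.enabled M t) :
    (N.rev).enabled (N.fire M t) t ∧ (N.rev).fire (N.fire M t) t = M := by
  constructor
  · intro p
    have := h p
    simp only [rev, fire]
    omega
  · funext p
    have := h p
    simp only [rev, fire]
    omega

lemma feasible_rev (N : PetriNet P T) :
    ∀ (σ : List T) {X Y : P → ℕ}, N.feasible X σ Y → (N.rev).feasible Y σ.reverse X := by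
  intro σ
  induction σ with
  | nil =>
      intro X Y h
      have : Y = X := h
      subst this; rfl
  | cons t σ' ih =>
      intro X Y h
      obtain ⟨hen, hfe⟩ := h
      have h1 := ih hfe
      obtain ⟨hen', hfi'⟩ := N.rev_enabled_fire hen
      have hlast : (N.rev).feasible (N.fire X t) [t] X := ⟨hen', hfi'.symm⟩
      have := (N.rev).feasible_append σ'.reverse [t] h1 hlast
      simpa using this

lemma rev_rev (N : PetriNet P T) : (N.rev).rev = N := rfl

/-- If from X we can really reach a marking reachable from M0 (in a propR system),
then X itself is reachable from M0. -/
lemma reach_of_reach_reach (N : PetriNet P T) {M0 X Y : P → ℕ}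
    (hR : N.propR M0) (hXY : N.reachable X Y) (hY : N.reachable M0 Y) :
    N.reachable M0 X := by
  have h1 : N.reachable Y M0 := hR.1 Y hY
  have h2 : N.reachable X M0 := N.reachable_trans hXY h1
  obtain ⟨τ, hτ⟩ := h2
  have h3 : (N.rev).reachable M0 X := ⟨τ.reverse, N.feasible_rev τ hτ⟩
  have h4 : (N.rev).reachable X M0 := hR.2 X h3
  obtain ⟨κ, hκ⟩ := h4
  have h5 : ((N.rev).rev).feasible M0 κ.reverse X := (N.rev).feasible_rev κ hκ
  exact ⟨κ.reverse, by rw [N.rev_rev] at h5; exact h5⟩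

/-- Liveness: from any reachable marking, there is a run containing any given transition. -/
lemma exists_run_with (N : PetriNet P T) {M0 A : P → ℕ}
    (hlive : N.live M0) (hA : N.reachable M0 A) (t : T) :
    ∃ (σ : List T) (X : P → ℕ), N.feasible A σ X ∧ t ∈ σ := by
  obtain ⟨M', hAM', hen⟩ := hlive t A hA
  obtain ⟨σ', hσ'⟩ := hAM'
  refine ⟨σ' ++ [t], N.fire M' t, ?_, by simp⟩
  exact N.feasible_append σ' [t] hσ' ⟨hen, rfl⟩

/-- Decompose a run at the first transition satisfying Q. -/
lemma exists_first_split (N : PetriNet P T) (Q : T → Prop) :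
    ∀ (σ : List T) {A X : P → ℕ}, N.feasible A σ X → (∃ v ∈ σ, Q v) →
    ∃ (ρ : List T) (v : T) (X₁ : P → ℕ), N.feasible A ρ X₁ ∧ N.enabled X₁ v ∧ Q v ∧
      (∀ r ∈ ρ, ¬ Q r) ∧ v ∈ σ := by
  intro σ
  induction σ with
  | nil => intro A X _ h; simp at h
  | cons a σ' ih =>
      intro A X hfe hex
      obtain ⟨hen, hfe'⟩ := hfe
      by_cases hQa : Q a
      · exact ⟨[], a, A, rfl, hen, hQa, by simp, by simp⟩
      · have hex' : ∃ v ∈ σ', Q v := by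
          obtain ⟨v, hv, hQv⟩ := hex
          rcases List.mem_cons.1 hv with h | h
          · exact absurd (h ▸ hQv) hQa
          · exact ⟨v, h, hQv⟩
        obtain ⟨ρ, v, X₁, h1, h2, h3, h4, h5⟩ := ih hfe' hex'
        refine ⟨a :: ρ, v, X₁, ⟨hen, h1⟩, h2, h3, ?_, by simp [h5]⟩
        intro r hr
        rcases List.mem_cons.1 hr with h | h
        · exact h ▸ hQa
        · exact h4 r h

/-- Places not consumed along a run do not decrease. -/
lemma marking_mono (N : PetriNet P T) {p : P} :
    ∀ (σ : List T) {A X : P → ℕ}, N.feasible A σ X → (∀ r ∈ σ, N.pre p r = 0) →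
      A p ≤ X p := by
  intro σ
  induction σ with
  | nil => intro A X h _; exact le_of_eq (congrFun (h : X = A) p).symm
  | cons a σ' ih =>
      intro A X h h0
      obtain ⟨hen, hfe⟩ := h
      have h1 : N.fire A a p = A p + N.post a p := by
        simp only [fire, h0 a (by simp)]
        omega
      have := ih hfe (fun r hr => h0 r (by simp [hr]))
      omega

/-- state equation along a run -/
lemma feasible_count (N : PetriNet P T) [Fintype T] :
    ∀ (σ : List T) {A X : P → ℕ}, N.feasible A σ X →
      ∀ p, (X p : ℤ) = (A p : ℤ) + ∑ t, N.inc p t * (σ.count t : ℤ) := by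
  intro σ
  induction σ with
  | nil =>
      intro A X h p
      have : X = A := h
      subst this; simp
  | cons a σ' ih =>
      intro A X h p
      obtain ⟨hen, hfe⟩ := h
      have h1 := ih hfe p
      have h2 := N.fire_cast hen p
      have hc : ∀ t : T, ((a :: σ').count t : ℤ) = (σ'.count t : ℤ) + (if t = a then 1 else 0) := by
        intro t
        rw [List.count_cons]
        by_cases ht : t = a
        · simp [ht]
        · have hba : (a == t) = false := beq_false_of_ne (Ne.symm ht)
          simp [ht, hba]
      calc (X p : ℤ) = (A p : ℤ) + N.inc p a + ∑ t, N.inc p t * (σ'.count t : ℤ) := by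
              rw [h1, h2]
        _ = (A p : ℤ) + ∑ t, N.inc p t * ((a :: σ').count t : ℤ) := by
              simp only [hc, mul_add]
              rw [Finset.sum_add_distrib]
              have : ∑ t, N.inc p t * (if t = a then (1:ℤ) else 0) = N.inc p a := by
                simp [mul_ite]
              rw [this]; ring

end PetriNet
end AuxProofs

section AuxProofs2
variable {P T : Type}
namespace PetriNet

lemma marking_const (N : PetriNet P T) {p : P} :
    ∀ (σ : List T) {A X : P → ℕ}, N.feasible A σ X →
      (∀ r ∈ σ, N.pre p r = 0 ∧ N.post r p = 0) → X p = A p := by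
  intro σ
  induction σ with
  | nil => intro A X h _; exact congrFun (h : X = A) p
  | cons a σ' ih =>
      intro A X h h0
      obtain ⟨hen, hfe⟩ := h
      have h1 : N.fire A a p = A p := by
        have := h0 a (by simp)
        simp only [fire, this.1, this.2]
        omega
      rw [ih hfe (fun r hr => h0 r (by simp [hr])), h1]

/-- Monotone replay. -/
lemma replay (N : PetriNet P T) :
    ∀ (σ : List T) {A X : P → ℕ} (A' : P → ℕ), N.feasible A σ X →
      (∀ q, (∃ r ∈ σ, 0 < N.pre q r) → A q ≤ A' q) →
      ∃ X', N.feasible A' σ X' := by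
  intro σ
  induction σ with
  | nil => intro A X A' _ _; exact ⟨A', rfl⟩
  | cons v σ' ih =>
      intro A X A' h hd
      obtain ⟨hen, hfe⟩ := h
      have hen' : N.enabled A' v := by
        intro q
        by_cases hq : 0 < N.pre q v
        · exact le_trans (hen q) (hd q ⟨v, by simp, hq⟩)
        · omega
      have hd' : ∀ q, (∃ r ∈ σ', 0 < N.pre q r) → N.fire A v q ≤ N.fire A' v q := by
        intro q hq
        obtain ⟨r, hr, hpr⟩ := hq
        have h1 : A q ≤ A' q := hd q ⟨r, by simp [hr], hpr⟩
        have h2 := hen q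
        simp only [fire]
        omega
      obtain ⟨X', hX'⟩ := ih (N.fire A' v) hfe hd'
      exact ⟨X', hen', hX'⟩

end PetriNet
end AuxProofs2

section AuxProofs3
variable {P T : Type}
namespace PetriNet

lemma mem_placePost {N : PetriNet P T} [Fintype T] {p : P} {t : T} :
    t ∈ N.placePost p ↔ 0 < N.pre p t := by simp [placePost]

lemma mem_placePre {N : PetriNet P T} [Fintype T] {p : P} {t : T} :
    t ∈ N.placePre p ↔ 0 < N.post t p := by simp [placePre]

/-- unique shared place -/
lemma shared_unique {N : PetriNet P T} [Fintype P] [Fintype T]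
    (hh1s : N.isH1SWMGle) {p q : P} (hp : N.isShared p) (hq : N.isShared q) : p = q := by
  have h := hh1s.2.1
  exact Finset.card_le_one.1 h p (by simp [hp]) q (by simp [hq])

/-- CLAIM-2: the reachability class is closed under valid pseudo-firings. -/
lemma pseudo_step (N : PetriNet P T) [Fintype P] [Fintype T] {M0 A : P → ℕ}
    (hh1s : N.isH1SWMGle) (hlive : N.live M0) (hR : N.propR M0)
    (hA : N.reachable M0 A) (t : T)
    (hval : ∀ p, (0:ℤ) ≤ (A p : ℤ) + N.inc p t) :
    N.reachable M0 (fun p => A p + N.post t p - N.pre p t) := by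
  set A' : P → ℕ := fun p => A p + N.post t p - N.pre p t with hA'def
  have hA'cast : ∀ p, ((A' p : ℕ) : ℤ) = (A p : ℤ) + N.inc p t := by
    intro p
    have := hval p
    simp only [hA'def, inc] at *
    omega
  by_cases hen : N.enabled A t
  · have hEq : A' = N.fire A t := by
      funext p
      have := hen p
      simp only [hA'def, fire]
      omega
    exact N.reachable_trans hA ⟨[t], hen, hEq⟩
  · -- not enabled: every real blocker is shared
    have hblock : ∀ p, A p < N.pre p t → N.isShared p := by
      intro p hp
      by_contra hns
      obtain ⟨hpre1, hpost1⟩ := hh1s.2.2 p hns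
      have hpost : 0 < N.post t p := by
        have := hval p; simp only [inc] at this; omega
      obtain ⟨σ, X, hfe, htσ⟩ := N.exists_run_with hlive hA t
      obtain ⟨ρ, v, X₁, h1, h2, h3, h4, -⟩ :=
        N.exists_first_split (fun r => r = t) σ hfe ⟨t, htσ, rfl⟩
      subst h3
      have hconst : X₁ p = A p := by
        refine N.marking_const ρ h1 ?_
        intro r hr
        constructor
        · by_contra h0
          exact (h4 r hr) (Finset.card_le_one.1 hpost1 r (mem_placePost.2 (by omega))
            v (mem_placePost.2 (by omega)))
        · by_contra h0
          exact (h4 r hr) (Finset.card_le_one.1 hpre1 r (mem_placePre.2 (by omega))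
            v (mem_placePre.2 hpost))
      have := h2 p
      omega
    obtain ⟨s, hs⟩ : ∃ s, A s < N.pre s t := by
      by_contra h
      push_neg at h
      exact hen h
    have hsShared : N.isShared s := hblock s hs
    have huniq : ∀ p, N.isShared p → p = s := fun p hp => shared_unique hh1s hp hsShared
    have hw : 0 < N.pre s t := by omega
    -- loan: run containing t, cut before first consumer of s
    obtain ⟨σ, X, hfe, htσ⟩ := N.exists_run_with hlive hA t
    obtain ⟨ρ', u, X₁, h1, h2, h3, h4, -⟩ :=
      N.exists_first_split (fun r => 0 < N.pre s r) σ hfe ⟨t, htσ, hw⟩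
    have hsu : N.pre s u = N.pre s t := hh1s.1 s u t h3 hw
    have hρs : ∀ r ∈ ρ', N.pre s r = 0 := by
      intro r hr
      have := h4 r hr
      omega
    -- t is enabled at X₁
    have henX₁ : N.enabled X₁ t := by
      intro p
      by_cases hp0 : N.pre p t = 0
      · omega
      · by_cases hps : p = s
        · have h2s := h2 s
          rw [hps]
          omega
        · have hnb : N.pre p t ≤ A p := by
            by_contra h
            push_neg at h
            exact hps (huniq p (hblock p h))
          have hmono : ∀ r ∈ ρ', N.pre p r = 0 := by
            intro r hr
            by_contra hr0
            have hpns : ¬ N.isShared p := fun h => hps (huniq p h)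
            have hcard := (hh1s.2.2 p hpns).2
            have hrt : r = t := Finset.card_le_one.1 hcard r (mem_placePost.2 (by omega))
              t (mem_placePost.2 (by omega))
            subst hrt
            exact hr0 (by rw [hρs r hr] at *; omega)
          exact le_trans hnb (N.marking_mono ρ' h1 hmono)
    have hX₂ : N.reachable M0 (N.fire X₁ t) :=
      N.reachable_trans hA ⟨ρ' ++ [t], N.feasible_append ρ' [t] h1 ⟨henX₁, rfl⟩⟩
    -- replay ρ' from A'
    have hd : ∀ q, (∃ r ∈ ρ', 0 < N.pre q r) → A q ≤ A' q := by
      intro q ⟨r, hr, hqr⟩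
      have hq0 : N.pre q t = 0 := by
        by_contra h0
        have hqs : q ≠ s := by
          intro h; subst h
          rw [hρs r hr] at hqr; omega
        have hqns : ¬ N.isShared q := fun h => hqs (huniq q h)
        have hcard := (hh1s.2.2 q hqns).2
        have hrt : r = t := Finset.card_le_one.1 hcard r (mem_placePost.2 hqr)
          t (mem_placePost.2 (by omega))
        subst hrt
        have := hρs r hr
        have := h4 r hr
        exact (h4 r hr) hw
      simp only [hA'def, hq0]
      omega
    obtain ⟨X', hX'⟩ := N.replay ρ' A' h1 hd
    have hXeq : X' = N.fire X₁ t := by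
      funext p
      have e1 := N.feasible_count ρ' h1 p
      have e2 := N.feasible_count ρ' hX' p
      have e3 := N.fire_cast henX₁ p
      have e4 := hA'cast p
      have : (X' p : ℤ) = ((N.fire X₁ t p : ℕ) : ℤ) := by
        rw [e2, e4, e3, e1]; ring
      exact_mod_cast this
  -- conclude
    rw [hXeq] at hX'
    exact N.reach_of_reach_reach hR ⟨ρ', hX'⟩ hX₂

end PetriNet
end AuxProofs3

section AuxProofs4
variable {P T : Type}
namespace PetriNet

lemma zsum_dec [Fintype T] (W : T → ℕ) (t : T) (ht : 0 < W t) (g : T → ℤ) :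
    ∑ u, g u * (((if u = t then W u - 1 else W u) : ℕ) : ℤ)
      = (∑ u, g u * (W u : ℤ)) - g t := by
  have hcast : ∀ u, (((if u = t then W u - 1 else W u) : ℕ) : ℤ)
      = (W u : ℤ) - (if u = t then 1 else 0) := by
    intro u
    by_cases h : u = t
    · subst h; simp only [eq_self_iff_true, if_true]; omega
    · simp [h]
  simp only [hcast, mul_sub]
  rw [Finset.sum_sub_distrib]
  have : ∑ u, g u * (if u = t then (1:ℤ) else 0) = g t := by
    simp [mul_ite]
  rw [this]

lemma sum_dec [Fintype T] (W : T → ℕ) (t : T) (ht : 0 < W t) :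
    (∑ u, (if u = t then W u - 1 else W u)) + 1 = ∑ u, W u := by
  have h := zsum_dec W t ht (fun _ => 1)
  simp only [one_mul] at h
  have h1 : ((∑ u, (if u = t then W u - 1 else W u) : ℕ) : ℤ)
      = ∑ u, (((if u = t then W u - 1 else W u) : ℕ) : ℤ) := by push_cast; rfl
  have h2 : ((∑ u, W u : ℕ) : ℤ) = ∑ u, ((W u : ℕ) : ℤ) := by push_cast; rfl
  omega

/-- MAIN lemma: any valid state-equation target from a reachable marking is reachable. -/
lemma main (N : PetriNet P T) [Fintype P] [Fintype T] {M0 : P → ℕ}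
    (hh1s : N.isH1SWMGle) (hlive : N.live M0) (hR : N.propR M0) :
    ∀ (n : ℕ) (A : P → ℕ) (W : T → ℕ) (B : P → ℕ),
      (∑ t, W t) = n → N.reachable M0 A →
      (∀ p, (B p : ℤ) = (A p : ℤ) + ∑ t, N.inc p t * (W t : ℤ)) →
      N.reachable M0 B := by
  intro n
  induction n using Nat.strong_induction_on with
  | _ n IH =>
    intro A W B hsum hA hB
    rcases Nat.eq_zero_or_pos n with hn | hn
    · subst hn
      have hW0 : ∀ t, W t = 0 :=
        fun t => Finset.sum_eq_zero_iff.1 hsum t (Finset.mem_univ t)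
      have hBA : B = A := by
        funext p
        have := hB p
        simp only [hW0, Nat.cast_zero, mul_zero, Finset.sum_const_zero, add_zero] at this
        exact_mod_cast this
      rwa [hBA]
    by_cases hpeel : ∃ t, 0 < W t ∧ ∀ p, (0:ℤ) ≤ (A p : ℤ) + N.inc p t
    · obtain ⟨t, hWt, hv⟩ := hpeel
      have hA' : N.reachable M0 (fun p => A p + N.post t p - N.pre p t) :=
        N.pseudo_step hh1s hlive hR hA t hv
      have hA'cast : ∀ p, (((fun p => A p + N.post t p - N.pre p t) p : ℕ) : ℤ)
          = (A p : ℤ) + N.inc p t := by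
        intro p
        have := hv p
        simp only [inc] at *
        omega
      refine IH (n-1) (by omega) _ (fun u => if u = t then W u - 1 else W u) B ?_ hA' ?_
      · show (∑ u, (if u = t then W u - 1 else W u)) = n - 1
        have := sum_dec W t hWt
        omega
      · intro p
        show (B p : ℤ) = _ + ∑ u, N.inc p u * (((if u = t then W u - 1 else W u) : ℕ) : ℤ)
        rw [zsum_dec W t hWt, hA'cast p, hB p]
        ring
    · push_neg at hpeel
      -- stuck case
      obtain ⟨t₀, hWt₀⟩ : ∃ t₀, 0 < W t₀ := by
        by_contra h
        push_neg at h
        have : ∑ t, W t = 0 := Finset.sum_eq_zero (fun t _ => by have := h t; omega)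
        omega
      -- LEM-D: a W-supported transition enabled after a W-free prefix has all its
      -- pseudo-blockers shared
      have hD : ∀ (ρ₀ : List T) (X₀ : P → ℕ) (v : T), N.feasible A ρ₀ X₀ →
          N.enabled X₀ v → 0 < W v → (∀ r ∈ ρ₀, W r = 0) →
          ∀ q, ¬ N.isShared q → (0:ℤ) ≤ (A q : ℤ) + N.inc q v := by
        intro ρ₀ X₀ v hfe hen hWv hfree q hqns
        by_contra hq
        push_neg at hq
        obtain ⟨hpre1, hpost1⟩ := hh1s.2.2 q hqns
        have hpreqv : 0 < N.pre q v := by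
          simp only [inc] at hq
          omega
        -- find a producer u of q with W u > 0, u ≠ v
        have hBq : (0:ℤ) ≤ (A q : ℤ) + ∑ u, N.inc q u * (W u : ℤ) := by
          rw [← hB q]; exact_mod_cast Nat.zero_le _
        have hterm : N.inc q v * (W v : ℤ) ≤ N.inc q v := by
          have h1 : N.inc q v < 0 := by simp only [inc] at hq ⊢; omega
          have h2 : (1:ℤ) ≤ (W v : ℤ) := by exact_mod_cast hWv
          nlinarith
        obtain ⟨u, huv, hupos⟩ : ∃ u, u ≠ v ∧ (0:ℤ) < N.inc q u * (W u : ℤ) := by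
          by_contra h
          push_neg at h
          have hle : ∑ u, N.inc q u * (W u : ℤ)
              ≤ ∑ u, (if u = v then N.inc q v * (W v : ℤ) else 0) := by
            refine Finset.sum_le_sum ?_
            intro u _
            by_cases h' : u = v
            · subst h'; simp
            · simp only [if_neg h']
              exact h u h'
          have hrhs : ∑ u, (if u = v then N.inc q v * (W v : ℤ) else 0)
              = N.inc q v * (W v : ℤ) := by simp
          rw [hrhs] at hle
          have h1 : N.inc q v < 0 := by simp only [inc] at hq ⊢; omega
          omega
        have hWu : 0 < W u := by
          by_contra h
          push_neg at h
          have : W u = 0 := by omega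
          simp [this] at hupos
        have hincu : (0:ℤ) < N.inc q u := by
          rcases lt_trichotomy (N.inc q u) 0 with h | h | h
          · nlinarith [Nat.cast_nonneg (α := ℤ) (W u)]
          · simp [h] at hupos
          · exact h
        have hpostuq : 0 < N.post u q := by
          simp only [inc] at hincu
          omega
        -- q is untouched along ρ₀
        have hconst : X₀ q = A q := by
          refine N.marking_const ρ₀ hfe ?_
          intro r hr
          constructor
          · by_contra h0
            have : r = v := Finset.card_le_one.1 hpost1 r (mem_placePost.2 (by omega))
              v (mem_placePost.2 hpreqv)
            subst this
            have := hfree r hr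
            omega
          · by_contra h0
            have : r = u := Finset.card_le_one.1 hpre1 r (mem_placePre.2 (by omega))
              u (mem_placePre.2 hpostuq)
            subst this
            have := hfree r hr
            omega
        have := hen q
        simp only [inc] at hq
        omega
      -- find t*
      obtain ⟨σ₀, X₀', hfe₀, ht₀σ⟩ := N.exists_run_with hlive hA t₀
      obtain ⟨ρ₀, tstar, X₀, hfeρ₀, henX₀, hWts, hρ₀free, -⟩ :=
        N.exists_first_split (fun r => 0 < W r) σ₀ hfe₀ ⟨t₀, ht₀σ, hWt₀⟩
      have hρ₀W : ∀ r ∈ ρ₀, W r = 0 := by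
        intro r hr
        have := hρ₀free r hr
        omega
      have hDt : ∀ q, ¬ N.isShared q → (0:ℤ) ≤ (A q : ℤ) + N.inc q tstar :=
        hD ρ₀ X₀ tstar hfeρ₀ henX₀ hWts hρ₀W
      obtain ⟨s, hs⟩ := hpeel tstar hWts
      have hsShared : N.isShared s := by
        by_contra h
        have := hDt s h
        omega
      have huniq : ∀ p, N.isShared p → p = s := fun p hp => shared_unique hh1s hp hsShared
      have hw : 0 < N.pre s tstar := by
        simp only [inc] at hs
        omega
      -- loan
      obtain ⟨σ₁, X₁', hfe₁, htsσ⟩ := N.exists_run_with hlive hA tstar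
      obtain ⟨ρ', u, X₁, h1, h2, h3, h4, huσ⟩ :=
        N.exists_first_split (fun r => 0 < N.pre s r) σ₁ hfe₁ ⟨tstar, htsσ, hw⟩
      have hρ's : ∀ r ∈ ρ', N.pre s r = 0 := by
        intro r hr
        have := h4 r hr
        omega
      have hsu : N.pre s u = N.pre s tstar := hh1s.1 s u tstar h3 hw
      -- ρ' is disjoint from the support of W
      have hρ'W : ∀ r ∈ ρ', W r = 0 := by
        intro r hr
        by_contra h0
        obtain ⟨ρ₀'', v, X₀'', hf'', hen'', hWv'', hfree'', hvρ'⟩ :=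
          N.exists_first_split (fun r => 0 < W r) ρ' h1 ⟨r, hr, by omega⟩
        have hDv : ∀ q, ¬ N.isShared q → (0:ℤ) ≤ (A q : ℤ) + N.inc q v :=
          hD ρ₀'' X₀'' v hf'' hen'' hWv'' (fun r' hr' => by have := hfree'' r' hr'; omega)
        obtain ⟨q, hq⟩ := hpeel v hWv''
        have hqs : q = s := huniq q (by
          by_contra h
          have := hDv q h
          omega)
        subst hqs
        have : 0 < N.pre q v := by
          simp only [inc] at hq
          omega
        rw [hρ's v hvρ'] at this
        omega
      -- the pseudo-firing of t* after the loan
      have hX₁reach : N.reachable M0 X₁ := N.reachable_trans hA ⟨ρ', h1⟩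
      have hX₂val : ∀ p, (0:ℤ) ≤ (X₁ p : ℤ) + N.inc p tstar := by
        intro p
        by_cases hps : p = s
        · subst hps
          have := h2 p
          simp only [inc]
          omega
        · by_cases hp0 : N.pre p tstar = 0
          · simp only [inc]
            omega
          · have hpns : ¬ N.isShared p := fun h => hps (huniq p h)
            have hcard := (hh1s.2.2 p hpns).2
            have hmono : ∀ r ∈ ρ', N.pre p r = 0 := by
              intro r hr
              by_contra hr0
              have : r = tstar := Finset.card_le_one.1 hcard r (mem_placePost.2 (by omega))
                tstar (mem_placePost.2 (by omega))
              subst this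
              rw [hρ's r hr] at hw
              omega
            have hge := N.marking_mono ρ' h1 hmono
            have := hDt p hpns
            simp only [inc] at *
            omega
      have hX₂ : N.reachable M0 (fun p => X₁ p + N.post tstar p - N.pre p tstar) :=
        N.pseudo_step hh1s hlive hR hX₁reach tstar hX₂val
      have hX₂cast : ∀ p, (((fun p => X₁ p + N.post tstar p - N.pre p tstar) p : ℕ) : ℤ)
          = (X₁ p : ℤ) + N.inc p tstar := by
        intro p
        have := hX₂val p
        simp only [inc] at *
        omega
      -- nonneg of suppW-flows on places consumed by ρ'
      have hWflow : ∀ q, (∃ r ∈ ρ', 0 < N.pre q r) →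
          (0:ℤ) ≤ ∑ t, N.inc q t * (W t : ℤ) := by
        intro q ⟨r, hr, hqr⟩
        refine Finset.sum_nonneg ?_
        intro t _
        rcases Nat.eq_zero_or_pos (W t) with h | h
        · simp [h]
        · have : (0:ℤ) ≤ N.inc q t := by
            by_contra hneg
            push_neg at hneg
            have hpreqt : 0 < N.pre q t := by simp only [inc] at hneg; omega
            have hqs : q ≠ s := by
              intro he; subst he
              rw [hρ's r hr] at hqr; omega
            have hqns : ¬ N.isShared q := fun hh => hqs (huniq q hh)
            have hcard := (hh1s.2.2 q hqns).2
            have : t = r := Finset.card_le_one.1 hcard t (mem_placePost.2 hpreqt)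
              r (mem_placePost.2 hqr)
            subst this
            have := hρ'W t hr
            omega
          positivity
      -- the shifted target B⁺
      set Bp : P → ℕ := fun p => ((B p : ℤ) + (X₁ p : ℤ) - (A p : ℤ)).toNat with hBpdef
      have hBpnn : ∀ p, (0:ℤ) ≤ (B p : ℤ) + (X₁ p : ℤ) - (A p : ℤ) := by
        intro p
        by_cases hc : ∃ r ∈ ρ', 0 < N.pre p r
        · have h1' := hWflow p hc
          have := hB p
          omega
        · push_neg at hc
          have : A p ≤ X₁ p := N.marking_mono ρ' h1 (fun r hr => by have := hc r hr; omega)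
          have hBnn : (0:ℤ) ≤ (B p : ℤ) := by exact_mod_cast Nat.zero_le _
          omega
      have hBpcast : ∀ p, (Bp p : ℤ) = (B p : ℤ) + (X₁ p : ℤ) - (A p : ℤ) := by
        intro p
        simp only [hBpdef]
        exact Int.toNat_of_nonneg (hBpnn p)
      -- apply IH to (X₂, W − 1_{t*}, B⁺)
      have hBpreach : N.reachable M0 Bp := by
        refine IH (n-1) (by omega) _ (fun u => if u = tstar then W u - 1 else W u) Bp ?_ hX₂ ?_
        · show (∑ u, (if u = tstar then W u - 1 else W u)) = n - 1
          have := sum_dec W tstar hWts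
          omega
        · intro p
          show (Bp p : ℤ) = _ + ∑ u, N.inc p u * (((if u = tstar then W u - 1 else W u) : ℕ) : ℤ)
          rw [hBpcast p, zsum_dec W tstar hWts, hX₂cast p, hB p]
          have e1 := N.feasible_count ρ' h1 p
          rw [e1]
          ring
      -- replay the loan from B
      have hd : ∀ q, (∃ r ∈ ρ', 0 < N.pre q r) → A q ≤ B q := by
        intro q hq
        have h1' := hWflow q hq
        have h2' := hB q
        have : (A q : ℤ) ≤ (B q : ℤ) := by omega
        exact_mod_cast this
      obtain ⟨X', hX'⟩ := N.replay ρ' B h1 hd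
      have hXeq : X' = Bp := by
        funext p
        have e1 := N.feasible_count ρ' h1 p
        have e2 := N.feasible_count ρ' hX' p
        have : (X' p : ℤ) = (Bp p : ℤ) := by
          rw [e2, hBpcast p, e1]
          ring
        exact_mod_cast this
      rw [hXeq] at hX'
      exact N.reach_of_reach_reach hR ⟨ρ', hX'⟩ hBpreach

end PetriNet
end AuxProofs4


/-- A live H1S-WMG≤ system satisfying property R fulfills the PR-R equality. -/
theorem stmt10 {P T : Type} [Fintype P] [Fintype T]
    (N : PetriNet P T) (M0 : P → ℕ)
    (hh1s : N.isH1SWMGle) (hlive : N.live M0) (hR : N.propR M0) :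
    ∀ M : P → ℕ, N.reachable M0 M ↔ N.potReach M0 M := by
  intro M
  constructor
  · rintro ⟨σ, hσ⟩
    exact ⟨fun t => σ.count t, N.feasible_count σ hσ⟩
  · rintro ⟨Y, hY⟩
    exact N.main hh1s hlive hR (∑ t, Y t) M0 Y M rfl (N.reachable_refl M0) hY
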